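/- arXiv:1102.0962 — 4 statements merged into one kernel-verified Lean document; each statement's English description precedes it below -/
import Mathlib

section
/- The 8×8 symmetric matrix P with entries (1/625)·[[24,-36,-36,24,-36,24,24,-36],[-36,277,97,-79,97,-79,-259,54],[-36,97,277,-79,97,-259,-79,54],[24,-79,-79,247,-259,67,67,-36],[-36,97,97,-259,277,-79,-79,54],[24,-79,-259,67,-79,247,67,-36],[24,-259,-79,67,-79,67,247,-36],[-36,54,54,-36,54,-36,-36,54]] is positive semidefinite. -/
open Matrix

theorem Matrix.posSemidef_sum_smul_vecMulVec_self_star {n ι R : Type*} [Finite n]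
    [CommRing R] [PartialOrder R] [StarRing R] [StarOrderedRing R]
    (s : Finset ι) (c : ι → R) (v : ι → n → R) (hc : ∀ i ∈ s, 0 ≤ c i) :
    (∑ i ∈ s, c i • vecMulVec (v i) (star (v i))).PosSemidef :=
  posSemidef_sum s fun i hi => (posSemidef_vecMulVec_self_star (v i)).smul (hc i hi)

/-- The rows of `Lᵀ` in the `L D Lᵀ` factorization of `625 • P`, scaled to integers;
`PWeight` holds the pivots of `D` divided by the squared scaling factors. -/
def PVector : Fin 4 → Fin 8 → ℝ :=
  ![![2, -3, -3, 2, -3, 2, 2, -3],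
    ![0, 223, 43, -43, 43, -43, -223, 0],
    ![0, 0, 266, -43, 43, -266, 0, 0],
    ![0, 0, 0, 1, -1, 0, 0, 0]]

noncomputable def PWeight : Fin 4 → ℝ := ![6, 1 / 223, 90 / 29659, 27810 / 133]

lemma PWeight_nonneg (i : Fin 4) : 0 ≤ PWeight i := by
  fin_cases i <;> norm_num [PWeight]

lemma P_eq_sum_smul_vecMulVec :
    (!![24,-36,-36,24,-36,24,24,-36;
      -36,277,97,-79,97,-79,-259,54;
      -36,97,277,-79,97,-259,-79,54;
      24,-79,-79,247,-259,67,67,-36;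
      -36,97,97,-259,277,-79,-79,54;
      24,-79,-259,67,-79,247,67,-36;
      24,-259,-79,67,-79,67,247,-36;
      -36,54,54,-36,54,-36,-36,54] : Matrix (Fin 8) (Fin 8) ℝ) =
      ∑ i, PWeight i • vecMulVec (PVector i) (star (PVector i)) := by
  ext i j
  simp only [Matrix.sum_apply, Matrix.smul_apply, vecMulVec_apply, Fin.sum_univ_four,
    star_trivial, smul_eq_mul]
  fin_cases i <;> fin_cases j <;> simp [PWeight, PVector] <;> norm_num

/-- The matrix P from the flag algebra proof is positive semidefinite. -/
theorem P_posSemidef :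
    ((1 / 625 : ℝ) • (!![24,-36,-36,24,-36,24,24,-36;
      -36,277,97,-79,97,-79,-259,54;
      -36,97,277,-79,97,-259,-79,54;
      24,-79,-79,247,-259,67,67,-36;
      -36,97,97,-259,277,-79,-79,54;
      24,-79,-259,67,-79,247,67,-36;
      24,-259,-79,67,-79,67,247,-36;
      -36,54,54,-36,54,-36,-36,54] : Matrix (Fin 8) (Fin 8) ℝ)).PosSemidef := by
  rw [P_eq_sum_smul_vecMulVec]
  exact (posSemidef_sum_smul_vecMulVec_self_star _ _ _ fun i _ => PWeight_nonneg i).smul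
    (by norm_num)
end

section
/- The 6×6 symmetric matrix Q with entries (1/2500)·[[1728,-1551,-1551,-1308,687,687],[-1551,2336,742,908,2557,-4084],[-1551,742,2336,908,-4084,2557],[-1308,908,908,1728,-254,-254],[687,2557,-4084,-254,15264,-14424],[687,-4084,2557,-254,-14424,15264]] is positive semidefinite. -/
/-!
Gaussian elimination on the integer matrix `2500 • Q` gives an `LDLᵀ` factorization with five
positive pivots and a vanishing last one. Dropping that pivot and clearing denominators in the rows
of the unitriangular factor (the fourth and fifth become `e₄` and `e₅ - e₆`) writes `2500 • Q` as
`Bᵀ * diagonal w * B` with `w ≥ 0`, which is positive semidefinite.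
-/

namespace QPosSemidef

open Matrix

def elimination : Matrix (Fin 5) (Fin 6) ℝ :=
  !![576, -517, -517, -436, 229, 229;
    0, 181223, -124825, -51076, 609337, -665735;
    0, 0, 89898412, -81415144, -232218765, 142320353;
    0, 0, 0, 1, 0, 0;
    0, 0, 0, 0, 1, -1]

noncomputable def pivots : Fin 5 → ℝ :=
  ![1 / 192, 1 / (192 * 181223), 1 / (181223 * 89898412), 7221232 / 28199, 3219791 / 3188]

lemma pivots_nonneg (k : Fin 5) : 0 ≤ pivots k := by
  fin_cases k <;> norm_num [pivots]

lemma eq_conjTranspose_elimination_mul_diagonal_mul :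
    (!![1728,-1551,-1551,-1308,687,687;
      -1551,2336,742,908,2557,-4084;
      -1551,742,2336,908,-4084,2557;
      -1308,908,908,1728,-254,-254;
      687,2557,-4084,-254,15264,-14424;
      687,-4084,2557,-254,-14424,15264] : Matrix (Fin 6) (Fin 6) ℝ) =
      eliminationᴴ * diagonal pivots * elimination := by
  ext i j
  fin_cases i <;> fin_cases j <;>
    simp [elimination, pivots, mul_apply, Fin.sum_univ_five, diagonal_apply] <;> norm_num

end QPosSemidef

/-- The matrix Q from the flag algebra proof is positive semidefinite. -/
theorem Q_posSemidef :
    ((1 / 2500 : ℝ) • (!![1728,-1551,-1551,-1308,687,687;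
      -1551,2336,742,908,2557,-4084;
      -1551,742,2336,908,-4084,2557;
      -1308,908,908,1728,-254,-254;
      687,2557,-4084,-254,15264,-14424;
      687,-4084,2557,-254,-14424,15264] : Matrix (Fin 6) (Fin 6) ℝ)).PosSemidef := by
  rw [QPosSemidef.eq_conjTranspose_elimination_mul_diagonal_mul]
  exact ((Matrix.PosSemidef.diagonal QPosSemidef.pivots_nonneg).conjTranspose_mul_mul_same
    QPosSemidef.elimination).smul (by norm_num)
end

section
/- The 5×5 symmetric matrix R with entries (1/625)·[[1512,568,-380,568,-376],[568,475,-191,0,-93],[-380,-191,192,-191,-2],[568,0,-191,475,-93],[-376,-93,-2,-93,190]] is positive semidefinite. -/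
/-!
`625 R = Bᴴ D B` for an explicit `3 × 5` matrix `B` and a nonnegative diagonal `D`. Swapping the
coordinates 1 and 3 fixes `625 R`, and `e₁ - e₃` is an eigenvector with eigenvalue 475: this is the
last row of `B`. On the symmetric part the form depends only on `x₀`, `x₁ + x₃`, `x₂`, `x₄`;
completing the square in `x₀` (the first row of `625 R` divided by 4) leaves a rank-one form, a
multiple of `(x₁ + x₃ - 2 x₂ + 2 x₄)²`.
-/

open Matrix

def gramFactor : Matrix (Fin 3) (Fin 5) ℝ :=
  !![378, 142, -95, 142, -94;
    0, 1, -2, 1, 2;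
    0, 1, 0, -1, 0]

noncomputable def gramWeights : Fin 3 → ℝ := ![2 / 189, 9119 / 378, 475 / 2]

theorem gramWeights_nonneg : 0 ≤ gramWeights := by
  intro i
  fin_cases i <;> norm_num [gramWeights]

theorem R_matrix_eq_gram :
    (!![1512,568,-380,568,-376;
      568,475,-191,0,-93;
      -380,-191,192,-191,-2;
      568,0,-191,475,-93;
      -376,-93,-2,-93,190] : Matrix (Fin 5) (Fin 5) ℝ) =
      gramFactorᴴ * diagonal gramWeights * gramFactor := by
  ext i j
  fin_cases i <;> fin_cases j <;>
    norm_num [gramFactor, gramWeights, mul_apply, diagonal_apply, Fin.sum_univ_succ]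

/-- The matrix R from the flag algebra proof is positive semidefinite. -/
theorem R_posSemidef :
    ((1 / 625 : ℝ) • (!![1512,568,-380,568,-376;
      568,475,-191,0,-93;
      -380,-191,192,-191,-2;
      568,0,-191,475,-93;
      -376,-93,-2,-93,190] : Matrix (Fin 5) (Fin 5) ℝ)).PosSemidef := by
  rw [R_matrix_eq_gram]
  exact ((PosSemidef.diagonal gramWeights_nonneg).conjTranspose_mul_mul_same gramFactor).smul
    (by norm_num)
end

section
/- If for every n the maximum number of induced copies of C5 in a triangle-free graph on n vertices is at most (24/625)·C(n,5) + o(n^5), then every triangle-free graph on n vertices has at most (n/5)^5 copies of C5; in particular, the existence of a single triangle-free graph on n vertices with strictly more than (n/5)^5 copies of C5 implies, via blow-ups, that ex_{C5}(nN, K3)/C(nN,5) exceeds 24/625 + 120ε/n^5 for some ε > 0 and all large N. -/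
open SimpleGraph Finset

/-- A finset `s` of vertices contains a 5-cycle of `G` as a subgraph. -/
def hasC5 {V : Type*} (G : SimpleGraph V) (s : Finset V) : Prop :=
  ∃ f : Fin 5 → V, Function.Injective f ∧ (∀ i, f i ∈ s) ∧ ∀ i, G.Adj (f i) (f (i + 1))

/-- The number of 5-element vertex subsets spanning a 5-cycle of `G`. -/
noncomputable def c5Count {V : Type*} (G : SimpleGraph V) : ℕ :=
  {s : Finset V | s.card = 5 ∧ hasC5 G s}.ncard

/-- Blow-up of a graph: each vertex replaced by `N` independent copies. -/
def blowup {V : Type*} (G : SimpleGraph V) (N : ℕ) : SimpleGraph (V × Fin N) where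
  Adj x y := G.Adj x.1 y.1
  symm := ⟨fun _ _ h => h.symm⟩
  loopless := ⟨fun x h => G.loopless.irrefl x.1 h⟩

/-- The 5-cycle graph. -/
def C5 : SimpleGraph (Fin 5) := SimpleGraph.fromRel (fun i j => j = i + 1)

/-- Number of vertex subsets of `G` inducing a copy of `A`. -/
noncomputable def inducedCount {α V : Type*} [Fintype V] (A : SimpleGraph α) (G : SimpleGraph V) : ℕ :=
  {s : Finset V | Nonempty ((G.induce (↑s : Set V)) ≃g A)}.ncard

theorem test : True := trivial
/-- Maximum number of 5-subsets spanning a 5-cycle over triangle-free graphs on m vertices. -/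
noncomputable def ex5 (m : ℕ) : ℕ :=
  sSup {c | ∃ G : SimpleGraph (Fin m), G.CliqueFree 3 ∧ c5Count G = c}

/-!
A triangle-free graph `G` on `n` vertices with `c` five-sets spanning a 5-cycle blows up to a
triangle-free graph `G[N]` on `nN` vertices with at least `c N⁵` such five-sets: every choice of
one copy per vertex of a 5-cycle-spanning five-set gives one. Since `120 · C(m, 5) < m⁵`, this
gives `ex5 (n N) / C(n N, 5) > 120 c / n⁵`, and `120 (n/5)⁵ / n⁵ = 24/625`. So if
`c > (n/5)⁵`, the blow-ups beat `24/625 · C(m, 5)` by a positive multiple of `m⁵`, which no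
`o(m⁵)` error term can absorb.
-/

theorem SimpleGraph.CliqueFree.of_hom {α β : Type*} {G : SimpleGraph α} {H : SimpleGraph β}
    {n : ℕ} (φ : G →g H) (h : H.CliqueFree n) : G.CliqueFree n := by
  rw [cliqueFree_iff, isEmpty_iff] at h ⊢
  intro f
  exact h ⟨φ.comp f.toHom, Hom.injective_of_top_hom _⟩

lemma blowup_cliqueFree {V : Type*} {G : SimpleGraph V} {n : ℕ} (h : G.CliqueFree n) (N : ℕ) :
    (blowup G N).CliqueFree n :=
  h.of_hom ⟨Prod.fst, id⟩

lemma c5Count_le_of_copy {V W : Type*} [Finite W] {G : SimpleGraph V} {H : SimpleGraph W}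
    (f : Copy G H) : c5Count G ≤ c5Count H := by
  classical
  refine Set.ncard_le_ncard_of_injOn (fun s => s.map ⟨f, f.injective⟩) ?_
    (fun s _ t _ hst => Finset.map_injective _ hst)
  rintro s ⟨hs, g, hg, hgs, hadj⟩
  exact ⟨by simpa using hs, f ∘ g, f.injective.comp hg, fun i => mem_map_of_mem _ (hgs i),
    fun i => f.toHom.map_adj (hadj i)⟩

lemma c5Count_le_ex5 {V : Type*} [Fintype V] {H : SimpleGraph V} (h : H.CliqueFree 3) :
    c5Count H ≤ ex5 (Fintype.card V) := by
  set e := Fintype.equivFin V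
  refine (c5Count_le_of_copy (Iso.map e H).toCopy).trans (le_csSup ?_ ⟨_, ?_, rfl⟩)
  · refine ⟨Nat.card (Finset (Fin (Fintype.card V))), ?_⟩
    rintro _ ⟨G, -, rfl⟩
    exact Set.ncard_le_card _
  · exact h.comap (Iso.map e H).symm.isContained

def liftCopies {V : Type*} {N : ℕ} (s : Finset V) (g : s → Fin N) : Finset (V × Fin N) :=
  s.attach.map ⟨fun v => (v.1, g v), fun _ _ h => Subtype.ext (congrArg Prod.fst h)⟩

lemma mem_liftCopies {V : Type*} {N : ℕ} {s : Finset V} {g : s → Fin N} {p : V × Fin N} :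
    p ∈ liftCopies s g ↔ ∃ h : p.1 ∈ s, g ⟨p.1, h⟩ = p.2 := by
  constructor
  · simp only [liftCopies, mem_map, mem_attach, true_and]
    rintro ⟨v, rfl⟩
    exact ⟨v.2, rfl⟩
  · rintro ⟨h, hg⟩
    exact mem_map.2 ⟨⟨p.1, h⟩, mem_attach _ _, Prod.ext rfl hg⟩

lemma image_fst_liftCopies {V : Type*} [DecidableEq V] {N : ℕ} (s : Finset V) (g : s → Fin N) :
    (liftCopies s g).image Prod.fst = s := by
  ext v
  simp only [mem_image, mem_liftCopies]
  exact ⟨fun ⟨p, ⟨hp, _⟩, hv⟩ => hv ▸ hp, fun hv => ⟨(v, g ⟨v, hv⟩), ⟨hv, rfl⟩, rfl⟩⟩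

lemma liftCopies_injective {V : Type*} [DecidableEq V] {N : ℕ} :
    Function.Injective (fun p : Σ s : Finset V, (s → Fin N) => liftCopies p.1 p.2) := by
  rintro ⟨s, g⟩ ⟨t, h⟩ (hst : liftCopies s g = liftCopies t h)
  obtain rfl : s = t := by
    rw [← image_fst_liftCopies s g, ← image_fst_liftCopies t h]
    exact congrArg _ hst
  obtain rfl : g = h := by
    funext v
    have hv : (v.1, g v) ∈ liftCopies s h := hst ▸ mem_liftCopies.2 ⟨v.2, rfl⟩
    exact (mem_liftCopies.1 hv).2.symm
  rfl

lemma card_liftCopies {V : Type*} {N : ℕ} (s : Finset V) (g : s → Fin N) :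
    (liftCopies s g).card = s.card := by
  simp [liftCopies]

lemma hasC5_liftCopies {V : Type*} {G : SimpleGraph V} {N : ℕ} {s : Finset V} (hs : hasC5 G s)
    (g : s → Fin N) : hasC5 (blowup G N) (liftCopies s g) := by
  obtain ⟨f, hf, hfs, hadj⟩ := hs
  exact ⟨fun i => (f i, g ⟨f i, hfs i⟩), fun i j h => hf (congrArg Prod.fst h),
    fun i => mem_liftCopies.2 ⟨hfs i, rfl⟩, hadj⟩

lemma c5Count_mul_pow_le_c5Count_blowup {V : Type*} [Finite V] (G : SimpleGraph V) (N : ℕ) :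
    c5Count G * N ^ 5 ≤ c5Count (blowup G N) := by
  classical
  set S := {s : Finset V | s.card = 5 ∧ hasC5 G s}
  set T := {s : Finset (V × Fin N) | s.card = 5 ∧ hasC5 (blowup G N) s}
  have := Fintype.ofFinite S
  have hcard : Nat.card (Σ s : S, (s.1 → Fin N)) = c5Count G * N ^ 5 :=
    calc Nat.card (Σ s : S, (s.1 → Fin N)) = ∑ _s : S, N ^ 5 := by
          rw [Nat.card_sigma]
          refine sum_congr rfl fun s _ => ?_
          rw [Nat.card_fun, Nat.card_fin, Nat.card_eq_finsetCard, s.2.1]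
      _ = c5Count G * N ^ 5 := by
          rw [sum_const, card_univ, smul_eq_mul, ← Nat.card_eq_fintype_card,
            Nat.card_coe_set_eq]
          rfl
  let lift : (Σ s : S, (s.1 → Fin N)) → T := fun p =>
    ⟨liftCopies p.1.1 p.2, (card_liftCopies _ _).trans p.1.2.1, hasC5_liftCopies p.1.2.2 p.2⟩
  have hlift : Function.Injective lift := by
    rintro ⟨⟨s, hs⟩, g⟩ ⟨⟨t, ht⟩, h⟩ hst
    obtain ⟨rfl, hgh⟩ := Sigma.mk.inj_iff.1 (liftCopies_injective (congrArg Subtype.val hst))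
    cases hgh
    rfl
  rw [← hcard, c5Count, ← Nat.card_coe_set_eq]
  exact Nat.card_le_card_of_injective lift hlift

lemma five_le_card_of_c5Count_pos {V : Type*} [Fintype V] {G : SimpleGraph V}
    (h : 0 < c5Count G) : 5 ≤ Fintype.card V := by
  obtain ⟨s, hs, -⟩ := Set.nonempty_of_ncard_ne_zero h.ne'
  exact hs ▸ card_le_univ s

lemma c5Count_mul_pow_le_ex5 {n : ℕ} {G : SimpleGraph (Fin n)} (hG : G.CliqueFree 3) (N : ℕ) :
    (c5Count G : ℝ) * N ^ 5 ≤ ex5 (n * N) := by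
  have h := (c5Count_mul_pow_le_c5Count_blowup G N).trans
    (c5Count_le_ex5 (blowup_cliqueFree hG N))
  rw [Fintype.card_prod, Fintype.card_fin, Fintype.card_fin] at h
  exact_mod_cast h

lemma choose_five_mul_lt_pow {m : ℕ} (hm : m ≠ 0) : 120 * (m.choose 5 : ℝ) < (m : ℝ) ^ 5 := by
  have h : m.descFactorial 5 < m ^ 5 := Nat.descFactorial_lt_pow (by omega) (by norm_num)
  rw [Nat.descFactorial_eq_factorial_mul_choose] at h
  exact_mod_cast h

lemma lt_ex5_div_choose {n : ℕ} {G : SimpleGraph (Fin n)} (hG : G.CliqueFree 3)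
    (hpos : 0 < c5Count G) {N : ℕ} (hN : 0 < N) :
    120 * (c5Count G : ℝ) / (n : ℝ) ^ 5 < (ex5 (n * N) : ℝ) / ((n * N).choose 5 : ℝ) := by
  have hn : 5 ≤ n := by simpa using five_le_card_of_c5Count_pos hpos
  have hnN : 5 ≤ n * N := hn.trans (Nat.le_mul_of_pos_right n hN)
  have hchoose : (0 : ℝ) < (n * N).choose 5 := by exact_mod_cast Nat.choose_pos hnN
  have hc : (0 : ℝ) < c5Count G := by exact_mod_cast hpos
  rw [div_lt_div_iff₀ (by positivity) hchoose]
  calc 120 * (c5Count G : ℝ) * (n * N).choose 5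
      = c5Count G * (120 * ((n * N).choose 5 : ℝ)) := by ring
    _ < c5Count G * ((n * N : ℕ) : ℝ) ^ 5 :=
        mul_lt_mul_of_pos_left (choose_five_mul_lt_pow (by omega)) hc
    _ = c5Count G * N ^ 5 * n ^ 5 := by push_cast; ring
    _ ≤ ex5 (n * N) * n ^ 5 := by gcongr; exact c5Count_mul_pow_le_ex5 hG N

lemma c5Count_le_of_ex5_le {f : ℕ → ℝ} (hf : f =o[Filter.atTop] (fun m : ℕ => (m : ℝ) ^ 5))
    (hex : ∀ m : ℕ, (ex5 m : ℝ) ≤ 24 / 625 * (m.choose 5 : ℝ) + f m)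
    {n : ℕ} {G : SimpleGraph (Fin n)} (hG : G.CliqueFree 3) :
    (c5Count G : ℝ) ≤ ((n : ℝ) / 5) ^ 5 := by
  by_contra! hlt
  have hpos : 0 < c5Count G := Nat.cast_pos.1 (lt_of_le_of_lt (by positivity) hlt)
  have hn : 5 ≤ n := by simpa using five_le_card_of_c5Count_pos hpos
  set δ := ((c5Count G : ℝ) - ((n : ℝ) / 5) ^ 5) / (n : ℝ) ^ 5
  have hδ : 0 < δ := div_pos (sub_pos.2 hlt) (by positivity)
  have hexcess : ∀ N : ℕ, 0 < N → δ ≤ f (n * N) / ((n * N : ℕ) : ℝ) ^ 5 := by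
    intro N hN
    have hchoose := choose_five_mul_lt_pow (m := n * N) (by positivity)
    have hblowup := (c5Count_mul_pow_le_ex5 hG N).trans (hex (n * N))
    have hkey : ((c5Count G : ℝ) - ((n : ℝ) / 5) ^ 5) * N ^ 5 ≤ f (n * N) := by
      push_cast at hchoose
      linarith
    calc δ = ((c5Count G : ℝ) - ((n : ℝ) / 5) ^ 5) * N ^ 5 / ((n * N : ℕ) : ℝ) ^ 5 := by
          simp only [δ]; push_cast; field_simp
      _ ≤ f (n * N) / ((n * N : ℕ) : ℝ) ^ 5 := by gcongr
  have hlim : Filter.Tendsto (fun N : ℕ => f (n * N) / ((n * N : ℕ) : ℝ) ^ 5) Filter.atTop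
      (nhds 0) :=
    hf.tendsto_div_nhds_zero.comp (Filter.tendsto_id.const_mul_atTop' (by omega))
  obtain ⟨N, hsmall, hN⟩ :=
    ((hlim.eventually (gt_mem_nhds hδ)).and (Filter.eventually_gt_atTop 0)).exists
  exact (hexcess N hN).not_gt hsmall

/-- If the Turán-type maximum for C5 in triangle-free graphs is at most
(24/625)·C(n,5) + o(n^5), then every triangle-free graph on n vertices has at most
(n/5)^5 copies of C5; in particular a single triangle-free graph beating (n/5)^5
forces, via blow-ups, ex_{C5}(nN,K3)/C(nN,5) > 24/625 + 120ε/n^5 for some ε > 0 and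
all large N. -/
theorem turan_density_argument :
    ((∃ f : ℕ → ℝ, f =o[Filter.atTop] (fun n : ℕ => (n : ℝ) ^ 5) ∧
        ∀ n : ℕ, (ex5 n : ℝ) ≤ 24 / 625 * (n.choose 5 : ℝ) + f n) →
      ∀ (n : ℕ) (G : SimpleGraph (Fin n)), G.CliqueFree 3 →
        (c5Count G : ℝ) ≤ ((n : ℝ) / 5) ^ 5) ∧
    (∀ (n : ℕ) (G : SimpleGraph (Fin n)), G.CliqueFree 3 →
      ((n : ℝ) / 5) ^ 5 < (c5Count G : ℝ) →
        ∃ ε : ℝ, 0 < ε ∧ ∃ N₀ : ℕ, ∀ N ≥ N₀,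
          24 / 625 + 120 * ε / (n : ℝ) ^ 5 <
            (ex5 (n * N) : ℝ) / ((n * N).choose 5 : ℝ)) := by
  refine ⟨fun ⟨f, hf, hex⟩ n G hG => c5Count_le_of_ex5_le hf hex hG, fun n G hG hlt => ?_⟩
  have hpos : 0 < c5Count G := Nat.cast_pos.1 (lt_of_le_of_lt (by positivity) hlt)
  have hn : 5 ≤ n := by simpa using five_le_card_of_c5Count_pos hpos
  have hn' : (n : ℝ) ≠ 0 := by exact_mod_cast (by omega : n ≠ 0)
  refine ⟨c5Count G - ((n : ℝ) / 5) ^ 5, sub_pos.2 hlt, 1, fun N hN => ?_⟩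
  convert lt_ex5_div_choose hG hpos hN using 1
  field_simp
  ring
end
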